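/- arXiv:1711.06410 — 3 statements merged into one kernel-verified Lean document; each statement's English description precedes it below -/
import Mathlib

section
/- Let a and b be nonzero integers with |a| ≠ 1. Then there exist a constant c > 0 and x₀ such that for all real x ≥ x₀, the number of primes p ≤ x with p ∤ a and such that the residue of b modulo p lies in the multiplicative subgroup of 𝔽_p^× generated by the residue of a modulo p is at least c·log log x. -/
/-!
For `k < n ≤ 2k` the integers `|a ^ n - b|` exceed `2 ^ k`, so their logarithms sum to at least
`k² log 2`. A prime dividing `a` divides `a ^ n - b` at most as often as it divides `b`, so such
primes contribute at most `log |b|` for each `n`. Every other prime `p` dividing some `a ^ n - b`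
is counted by the theorem, and its total contribution is small: the `n` with `p ^ m ∣ a ^ n - b`
form one residue class modulo the order `d` of `a` modulo `p ^ m`, and `p ^ m ≤ C ^ d` for
`C = |a| + |b|`, so summing over `m` gives a harmonic sum, at most `2k log C (2 + log (2Ck))`.
Hence there are `≳ k / log² k` such primes, all at most `C ^ (2k)`, which beats `log log x`
for `x ≈ C ^ (2k)`.
-/

open Finset Filter

namespace TwoVariableArtin

variable {a b : ℤ}

lemma natAbs_pow_sub_le (a b : ℤ) {n : ℕ} (hn : n ≠ 0) :
    (a ^ n - b).natAbs ≤ (a.natAbs + b.natAbs) ^ n :=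
  calc (a ^ n - b).natAbs ≤ a.natAbs ^ n + b.natAbs := by
        simpa [Int.natAbs_pow] using Int.natAbs_sub_le (a ^ n) b
    _ ≤ a.natAbs ^ n + b.natAbs ^ n := Nat.add_le_add_left (Nat.le_self_pow hn _) _
    _ ≤ (a.natAbs + b.natAbs) ^ n := pow_add_pow_le (Nat.zero_le _) (Nat.zero_le _) hn

lemma two_pow_pred_le_natAbs_pow_sub (ha : 2 ≤ a.natAbs) {n : ℕ} (hn : b.natAbs < n) :
    2 ^ (n - 1) ≤ (a ^ n - b).natAbs := by
  have hb : b.natAbs < 2 ^ (n - 1) := (Nat.le_sub_one_of_lt hn).trans_lt Nat.lt_two_pow_self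
  have hpow : 2 ^ n = 2 * 2 ^ (n - 1) := by rw [← pow_succ']; congr 1; omega
  have hsum : a.natAbs ^ n ≤ (a ^ n - b).natAbs + b.natAbs := by
    simpa [Int.natAbs_pow] using Int.natAbs_add_le (a ^ n - b) b
  have := Nat.pow_le_pow_left ha n
  omega

lemma card_le_div_add_one_of_modEq {S : Finset ℕ} {K d : ℕ} (hS : ∀ n ∈ S, n ≤ K)
    (hmod : ∀ n ∈ S, ∀ m ∈ S, n ≡ m [MOD d]) : #S ≤ K / d + 1 :=
  calc #S ≤ #(range (K / d + 1)) := by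
        refine card_le_card_of_injOn (· / d) (fun n hn => ?_) (fun n hn m hm h => ?_)
        · simpa [Nat.lt_succ_iff] using Nat.div_le_div_right (c := d) (hS n hn)
        · rw [← Nat.div_add_mod n d, ← Nat.div_add_mod m d, (hmod n hn m hm : n % d = m % d)]
          exact congrArg (d * · + m % d) h
    _ = K / d + 1 := card_range _

lemma card_filter_dvd_pow_sub_le {q : ℕ} [NeZero q] (haq : IsUnit (a : ZMod q))
    {S : Finset ℕ} {K : ℕ} (hS : ∀ n ∈ S, n ≤ K) :
    #{n ∈ S | q ∣ (a ^ n - b).natAbs} ≤ K / orderOf (a : ZMod q) + 1 := by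
  have hpow : ∀ n ∈ {n ∈ S | q ∣ (a ^ n - b).natAbs}, (a : ZMod q) ^ n = b := by
    intro n hn
    have := (ZMod.intCast_eq_intCast_iff_dvd_sub (a ^ n) b q).2
      (dvd_sub_comm.1 (Int.natCast_dvd.2 (mem_filter.1 hn).2))
    exact_mod_cast this
  refine card_le_div_add_one_of_modEq (fun n hn => hS n (mem_filter.1 hn).1) fun n hn m hm => ?_
  rw [← haq.isOfFinOrder.pow_eq_pow_iff_modEq, hpow n hn, hpow m hm]

lemma le_pow_orderOf (ha : 2 ≤ a.natAbs) {q : ℕ} [NeZero q] (haq : IsUnit (a : ZMod q)) :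
    q ≤ (a.natAbs + 1) ^ orderOf (a : ZMod q) := by
  set d := orderOf (a : ZMod q)
  have hd : d ≠ 0 := haq.isOfFinOrder.orderOf_pos.ne'
  have hdvd : (q : ℤ) ∣ a ^ d - 1 := by
    rw [← ZMod.intCast_eq_intCast_iff_dvd_sub]
    push_cast
    exact (pow_orderOf_eq_one _).symm
  have hne : a ^ d - 1 ≠ 0 := by
    intro h
    have := congrArg Int.natAbs (sub_eq_zero.1 h)
    simp only [Int.natAbs_pow, Int.natAbs_one, pow_eq_one_iff, hd, or_false] at this
    omega
  calc q ≤ (a ^ d - 1).natAbs := Nat.le_of_dvd (Int.natAbs_pos.2 hne) (Int.natCast_dvd.1 hdvd)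
    _ ≤ (a.natAbs + 1) ^ d := by simpa using natAbs_pow_sub_le a 1 hd

lemma card_filter_pow_dvd_mul_log_le (ha : 2 ≤ a.natAbs) {C : ℕ} (hC : a.natAbs + 1 ≤ C)
    {p : ℕ} (hp : p.Prime) (hpa : ¬ (p : ℤ) ∣ a) {S : Finset ℕ} {K : ℕ}
    (hS : ∀ n ∈ S, n ≤ K) {m : ℕ} (hm : m ≠ 0) :
    #{n ∈ S | p ^ m ∣ (a ^ n - b).natAbs} * Real.log p ≤ K * Real.log C / m + Real.log p := by
  have : NeZero (p ^ m) := ⟨pow_ne_zero m hp.ne_zero⟩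
  have haq : IsUnit (a : ZMod (p ^ m)) := by
    rw [ZMod.coe_int_isUnit_iff_isCoprime, Nat.cast_pow]
    exact ((Nat.prime_iff_prime_int.1 hp).coprime_iff_not_dvd.2 hpa).pow_left
  set d := orderOf (a : ZMod (p ^ m))
  have hd : 0 < d := haq.isOfFinOrder.orderOf_pos
  have hcard : (#{n ∈ S | p ^ m ∣ (a ^ n - b).natAbs} : ℝ) ≤ K / d + 1 :=
    (Nat.cast_le.2 (card_filter_dvd_pow_sub_le (b := b) haq hS)).trans
      (by push_cast; gcongr; exact Nat.cast_div_le)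
  have horder : m * Real.log p ≤ d * Real.log C := by
    rw [← Real.log_pow, ← Real.log_pow]
    refine Real.log_le_log (pow_pos (Nat.cast_pos.2 hp.pos) m) ?_
    exact_mod_cast (le_pow_orderOf ha haq).trans (Nat.pow_le_pow_left hC d)
  have hlogp : 0 ≤ Real.log p := Real.log_natCast_nonneg p
  calc #{n ∈ S | p ^ m ∣ (a ^ n - b).natAbs} * Real.log p ≤ (K / d + 1) * Real.log p := by
        gcongr
    _ = K * (m * Real.log p) / (m * d) + Real.log p := by field_simp
    _ ≤ K * (d * Real.log C) / (m * d) + Real.log p := by gcongr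
    _ = K * Real.log C / m + Real.log p := by field_simp

lemma factorization_le_card_filter_pow_dvd {N p M : ℕ} (hp : p.Prime) (hN : N < p ^ (M + 1)) :
    N.factorization p ≤ #{m ∈ Icc 1 M | p ^ m ∣ N} := by
  rcases Nat.eq_zero_or_pos N with rfl | hN0
  · simp
  rw [Nat.factorization_eq_card_pow_dvd_of_lt hp hN0 hN, Finset.Ico_add_one_right_eq_Icc]

lemma le_mul_of_pow_le_pow {p C M K : ℕ} (hp : 2 ≤ p) (h : p ^ M ≤ C ^ K) : M ≤ C * K := by
  refine (Nat.pow_le_pow_iff_right one_lt_two).1 ?_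
  calc 2 ^ M ≤ p ^ M := Nat.pow_le_pow_left hp M
    _ ≤ C ^ K := h
    _ ≤ (2 ^ C) ^ K := Nat.pow_le_pow_left Nat.lt_two_pow_self.le K
    _ = 2 ^ (C * K) := (pow_mul 2 C K).symm

lemma sum_factorization_mul_log_le (ha : 2 ≤ a.natAbs) (hb : b ≠ 0) {C : ℕ}
    (hC : a.natAbs + b.natAbs ≤ C) {p : ℕ} (hp : p.Prime) (hpa : ¬ (p : ℤ) ∣ a)
    {S : Finset ℕ} {K : ℕ} (hS : ∀ n ∈ S, 0 < n ∧ n ≤ K) :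
    (∑ n ∈ S, ((a ^ n - b).natAbs.factorization p : ℝ)) * Real.log p ≤
      K * Real.log C * (2 + Real.log (C * K)) := by
  set M := Nat.log p (C ^ K)
  have hC0 : C ≠ 0 := by have := Int.natAbs_ne_zero.2 hb; omega
  have hpM : p ^ M ≤ C ^ K := Nat.pow_log_le_self p (pow_ne_zero K hC0)
  have hfM : ∀ n ∈ S, (a ^ n - b).natAbs < p ^ (M + 1) := fun n hn =>
    calc (a ^ n - b).natAbs ≤ (a.natAbs + b.natAbs) ^ n := natAbs_pow_sub_le a b (hS n hn).1.ne'
      _ ≤ C ^ n := Nat.pow_le_pow_left hC n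
      _ ≤ C ^ K := Nat.pow_le_pow_right (Nat.pos_of_ne_zero hC0) (hS n hn).2
      _ < p ^ (M + 1) := Nat.lt_pow_succ_log_self hp.one_lt _
  have hMlog : M * Real.log p ≤ K * Real.log C := by
    rw [← Real.log_pow, ← Real.log_pow]
    exact Real.log_le_log (pow_pos (Nat.cast_pos.2 hp.pos) M) (by exact_mod_cast hpM)
  have hMCK : M ≤ C * K := le_mul_of_pow_le_pow hp.two_le hpM
  have hswap : ∑ n ∈ S, (a ^ n - b).natAbs.factorization p ≤
      ∑ m ∈ Icc 1 M, #{n ∈ S | p ^ m ∣ (a ^ n - b).natAbs} :=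
    (sum_le_sum fun n hn => factorization_le_card_filter_pow_dvd hp (hfM n hn)).trans_eq
      (sum_card_bipartiteAbove_eq_sum_card_bipartiteBelow
        (r := fun n m => p ^ m ∣ (a ^ n - b).natAbs))
  have hharmonic : ∑ m ∈ Icc 1 M, (m : ℝ)⁻¹ ≤ 1 + Real.log (C * K) :=
    calc ∑ m ∈ Icc 1 M, (m : ℝ)⁻¹ ≤ ∑ m ∈ Icc 1 (C * K), (m : ℝ)⁻¹ :=
          sum_le_sum_of_subset_of_nonneg (Icc_subset_Icc_right hMCK) fun _ _ _ => by positivity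
      _ ≤ 1 + Real.log (C * K) := by
          simpa [harmonic_eq_sum_Icc] using harmonic_le_one_add_log (C * K)
  calc (∑ n ∈ S, ((a ^ n - b).natAbs.factorization p : ℝ)) * Real.log p
      ≤ ∑ m ∈ Icc 1 M, (#{n ∈ S | p ^ m ∣ (a ^ n - b).natAbs} * Real.log p) := by
        rw [← sum_mul]; gcongr; exact_mod_cast hswap
    _ ≤ ∑ m ∈ Icc 1 M, (K * Real.log C / m + Real.log p) := by
        gcongr with m hm
        exact card_filter_pow_dvd_mul_log_le ha (by omega) hp hpa (fun n hn => (hS n hn).2)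
          (by simp only [mem_Icc] at hm; omega)
    _ = K * Real.log C * ∑ m ∈ Icc 1 M, (m : ℝ)⁻¹ + M * Real.log p := by
        simp [sum_add_distrib, mul_sum, div_eq_mul_inv]
    _ ≤ K * Real.log C * (1 + Real.log (C * K)) + K * Real.log C := by
        gcongr
    _ = K * Real.log C * (2 + Real.log (C * K)) := by ring

lemma sum_mul_log_le_log {N : ℕ} {s : Finset ℕ} {e : ℕ → ℕ}
    (he : ∀ p ∈ s, e p ≤ N.factorization p) :
    ∑ p ∈ s, (e p : ℝ) * Real.log p ≤ Real.log N := by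
  calc ∑ p ∈ s, (e p : ℝ) * Real.log p ≤ ∑ p ∈ s, (N.factorization p : ℝ) * Real.log p := by
        gcongr with p hp; exact_mod_cast he p hp
    _ ≤ ∑ p ∈ s ∪ N.primeFactors, (N.factorization p : ℝ) * Real.log p :=
        sum_le_sum_of_subset_of_nonneg subset_union_left fun p _ _ => by positivity
    _ = ∑ p ∈ N.primeFactors, (N.factorization p : ℝ) * Real.log p :=
        (sum_subset subset_union_right fun p _ hp => by
          rw [← Nat.support_factorization, Finsupp.notMem_support_iff] at hp
          simp [hp]).symm
    _ = Real.log N := by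
        rw [Real.log_nat_eq_sum_factorization, Finsupp.sum, Nat.support_factorization]

lemma factorization_natAbs_pow_sub_le (hb : b ≠ 0) {p n : ℕ} (hp : p.Prime) (hpa : (p : ℤ) ∣ a)
    (hn : b.natAbs < n) :
    (a ^ n - b).natAbs.factorization p ≤ b.natAbs.factorization p := by
  have hdvd_b : ∀ j ≤ n, (p : ℤ) ^ j ∣ a ^ n - b → p ^ j ∣ b.natAbs := fun j hj h => by
    have := (dvd_sub ((pow_dvd_pow (p : ℤ) hj).trans (pow_dvd_pow_of_dvd hpa n)) h)
    rw [sub_sub_cancel] at this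
    exact_mod_cast Int.natAbs_dvd_natAbs.2 this
  set v := (a ^ n - b).natAbs.factorization p
  have hv : (p : ℤ) ^ v ∣ a ^ n - b := by exact_mod_cast Int.natCast_dvd.2 (Nat.ordProj_dvd _ p)
  have hvn : v ≤ n := by
    by_contra! h
    have := Nat.le_of_dvd (Int.natAbs_pos.2 hb) (hdvd_b n le_rfl ((pow_dvd_pow _ h.le).trans hv))
    have := Nat.pow_le_pow_left hp.two_le n
    have := @Nat.lt_two_pow_self n
    omega
  exact (hp.pow_dvd_iff_le_factorization (Int.natAbs_ne_zero.2 hb)).1 (hdvd_b v hvn hv)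

lemma log_natAbs_pow_sub_le (hb : b ≠ 0) {n : ℕ} (hn : b.natAbs < n) :
    Real.log (a ^ n - b).natAbs ≤ Real.log b.natAbs +
      ∑ p ∈ (a ^ n - b).natAbs.primeFactors.filter (fun p : ℕ => ¬ (p : ℤ) ∣ a),
        ((a ^ n - b).natAbs.factorization p : ℝ) * Real.log p := by
  rw [Real.log_nat_eq_sum_factorization, Finsupp.sum, Nat.support_factorization,
    ← sum_filter_add_sum_filter_not _ (fun p : ℕ => (p : ℤ) ∣ a)]
  gcongr
  refine sum_mul_log_le_log fun p hp => ?_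
  obtain ⟨hpf, hpa⟩ := mem_filter.1 hp
  exact factorization_natAbs_pow_sub_le hb (Nat.prime_of_mem_primeFactors hpf) hpa hn

lemma mul_mul_log_two_le_sum_log (ha : 2 ≤ a.natAbs) {k : ℕ} (hk : b.natAbs ≤ k) :
    k * (k * Real.log 2) ≤ ∑ n ∈ Ioc k (2 * k), Real.log (a ^ n - b).natAbs := by
  have hcard : #(Ioc k (2 * k)) = k := by simp only [Nat.card_Ioc]; omega
  calc (k : ℝ) * (k * Real.log 2) = #(Ioc k (2 * k)) • (k * Real.log 2) := by
        rw [hcard, nsmul_eq_mul]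
    _ ≤ ∑ n ∈ Ioc k (2 * k), Real.log (a ^ n - b).natAbs := by
        refine card_nsmul_le_sum _ _ _ fun n hn => ?_
        have hkn : 2 ^ k ≤ (a ^ n - b).natAbs :=
          (Nat.pow_le_pow_right two_pos (by simp only [mem_Ioc] at hn; omega)).trans
            (two_pow_pred_le_natAbs_pow_sub ha (by simp only [mem_Ioc] at hn; omega))
        rw [← Real.log_rpow two_pos]
        exact Real.log_le_log (by positivity) (by exact_mod_cast hkn)

def powSubPrimeFactors (a b : ℤ) (k : ℕ) : Finset ℕ :=
  (Ioc k (2 * k)).biUnion fun n =>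
    (a ^ n - b).natAbs.primeFactors.filter fun p : ℕ => ¬ (p : ℤ) ∣ a

lemma mul_log_two_le (ha : 2 ≤ a.natAbs) (hb : b ≠ 0) {C : ℕ} (hC : a.natAbs + b.natAbs ≤ C)
    {k : ℕ} (hk : b.natAbs < k) :
    k * Real.log 2 ≤ Real.log b.natAbs +
      2 * #(powSubPrimeFactors a b k) * Real.log C * (2 + Real.log (C * (2 * k))) := by
  set F := powSubPrimeFactors a b k
  have hsplit : ∀ n ∈ Ioc k (2 * k), Real.log (a ^ n - b).natAbs ≤ Real.log b.natAbs +
      ∑ p ∈ F, ((a ^ n - b).natAbs.factorization p : ℝ) * Real.log p := fun n hn =>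
    (log_natAbs_pow_sub_le hb (by simp only [mem_Ioc] at hn; omega)).trans <| by
      gcongr
      exact fun p hp => mem_biUnion.2 ⟨n, hn, hp⟩
  have hprime : ∀ p ∈ F, (∑ n ∈ Ioc k (2 * k), ((a ^ n - b).natAbs.factorization p : ℝ)) *
      Real.log p ≤ (2 * k : ℕ) * Real.log C * (2 + Real.log (C * (2 * k : ℕ))) := fun p hp => by
    obtain ⟨n, -, hpn⟩ := mem_biUnion.1 hp
    obtain ⟨hpf, hpa⟩ := mem_filter.1 hpn
    exact sum_factorization_mul_log_le ha hb hC (Nat.prime_of_mem_primeFactors hpf) hpa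
      fun n hn => by simp only [mem_Ioc] at hn; omega
  have hcard : #(Ioc k (2 * k)) = k := by simp only [Nat.card_Ioc]; omega
  have hsum := (mul_mul_log_two_le_sum_log ha hk.le).trans <|
    calc ∑ n ∈ Ioc k (2 * k), Real.log (a ^ n - b).natAbs
        ≤ ∑ n ∈ Ioc k (2 * k), (Real.log b.natAbs +
            ∑ p ∈ F, ((a ^ n - b).natAbs.factorization p : ℝ) * Real.log p) := sum_le_sum hsplit
      _ = k * Real.log b.natAbs +
            ∑ p ∈ F, (∑ n ∈ Ioc k (2 * k), ((a ^ n - b).natAbs.factorization p : ℝ)) *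
              Real.log p := by
          rw [sum_add_distrib, sum_const, hcard, nsmul_eq_mul, sum_comm]
          simp_rw [sum_mul]
      _ ≤ k * Real.log b.natAbs +
            #F • ((2 * k : ℕ) * Real.log C * (2 + Real.log (C * (2 * k : ℕ)))) := by
          gcongr; exact sum_le_card_nsmul _ _ _ hprime
  have hk0 : (0 : ℝ) < k := by exact_mod_cast (Nat.zero_le _).trans_lt hk
  refine le_of_mul_le_mul_left (hsum.trans_eq ?_) hk0
  push_cast
  ring

lemma eventually_log_pow_le {c ε : ℝ} (hc : 0 < c) (hε : 0 < ε) (n : ℕ) :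
    ∀ᶠ k : ℕ in atTop, Real.log (c * k) ^ n ≤ ε * k := by
  have h := (Real.isLittleO_pow_log_id_atTop (n := n)).comp_tendsto
    (tendsto_natCast_atTop_atTop.const_mul_atTop hc)
  filter_upwards [h.bound (div_pos hε hc)] with k hk
  simp only [Function.comp_apply, id, Real.norm_eq_abs] at hk
  calc Real.log (c * k) ^ n ≤ ε / c * |c * k| := (le_abs_self _).trans hk
    _ = ε * k := by rw [abs_of_nonneg (by positivity)]; field_simp

lemma eventually_log_le_card_powSubPrimeFactors (ha : 2 ≤ a.natAbs) (hb : b ≠ 0) {C : ℕ}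
    (hC : a.natAbs + b.natAbs ≤ C) :
    ∀ᶠ k : ℕ in atTop, Real.log (2 * (k + 1) * Real.log C) ≤ #(powSubPrimeFactors a b k) := by
  have hB : 1 ≤ b.natAbs := Int.natAbs_pos.2 hb
  have hC3 : (3 : ℝ) ≤ C := by exact_mod_cast (by omega : 3 ≤ C)
  filter_upwards [eventually_gt_atTop b.natAbs,
    eventually_log_pow_le (c := 4 * C) (ε := Real.log 2 / 7) (by positivity) (by positivity) 3]
    with k hk ht
  have hk1 : (1 : ℝ) ≤ k := by exact_mod_cast (by omega : 1 ≤ k)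
  -- Every logarithm below is at most `t`, and `7 t³ ≤ k log 2`.
  set t := Real.log (4 * C * k)
  have hlogC : 1 < Real.log C := by
    rw [Real.lt_log_iff_exp_lt (by positivity)]
    linarith [Real.exp_one_lt_d9]
  have hlogC_le : Real.log C ≤ C := Real.log_le_self (by positivity)
  have hCt : Real.log C ≤ t := Real.log_le_log (by positivity) (by nlinarith)
  have ht1 : 1 ≤ t := hlogC.le.trans hCt
  have hBt : Real.log b.natAbs ≤ t := Real.log_le_log (by exact_mod_cast hB) (by
    have : (b.natAbs : ℝ) ≤ C := by exact_mod_cast (by omega : b.natAbs ≤ C)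
    nlinarith)
  have hlt : Real.log (2 * (k + 1) * Real.log C) ≤ t :=
    Real.log_le_log (by positivity) (by nlinarith)
  have hC2kt : Real.log (C * (2 * k)) ≤ t := Real.log_le_log (by positivity) (by nlinarith)
  have hlogCk : 0 ≤ Real.log (C * (2 * k)) := Real.log_nonneg (by nlinarith)
  set Q := 2 * Real.log C * (2 + Real.log (C * (2 * k)))
  have key : k * Real.log 2 ≤ Real.log b.natAbs + #(powSubPrimeFactors a b k) * Q :=
    (mul_log_two_le ha hb hC hk).trans_eq (by ring)
  have hQ : 0 < Q := by positivity
  have hQt : Q ≤ 2 * t * (2 + t) :=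
    mul_le_mul (by linarith) (by linarith) (by linarith) (by linarith)
  have hlogQ : Real.log (2 * (k + 1) * Real.log C) * Q ≤ 6 * t ^ 3 := by
    have hl0 : 0 ≤ Real.log (2 * (k + 1) * Real.log C) := Real.log_nonneg (by nlinarith)
    have : Real.log (2 * (k + 1) * Real.log C) * Q ≤ t * (2 * t * (2 + t)) :=
      mul_le_mul hlt hQt hQ.le (by linarith)
    nlinarith [pow_le_pow_right₀ ht1 (show 2 ≤ 3 by norm_num)]
  have ht3 : t ≤ t ^ 3 := le_self_pow₀ ht1 (by norm_num)
  exact le_of_mul_le_mul_right (by linarith) hQ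

lemma coe_powSubPrimeFactors_subset {C k : ℕ} (hC : a.natAbs + b.natAbs ≤ C) {x : ℝ}
    (hx : (C : ℝ) ^ (2 * k) ≤ x) :
    ↑(powSubPrimeFactors a b k) ⊆ {p : ℕ | p.Prime ∧ (p : ℝ) ≤ x ∧ ¬ (p : ℤ) ∣ a ∧
      ∃ n : ℕ, 0 < n ∧ (a : ZMod p) ^ n = (b : ZMod p)} := by
  intro p hp
  obtain ⟨n, hn, hpn⟩ := mem_biUnion.1 hp
  obtain ⟨hpf, hpa⟩ := mem_filter.1 hpn
  obtain ⟨hp, hdvd, hne⟩ := Nat.mem_primeFactors.1 hpf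
  obtain ⟨hkn, hn2k⟩ := mem_Ioc.1 hn
  have hfC : (a ^ n - b).natAbs ≤ C ^ n :=
    (natAbs_pow_sub_le a b (by omega)).trans (Nat.pow_le_pow_left hC n)
  have hC0 : 0 < C :=
    Nat.pos_of_ne_zero fun h => hne (by simpa [h, show n ≠ 0 by omega] using hfC)
  refine ⟨hp, ?_, hpa, n, by omega, ?_⟩
  · calc (p : ℝ) ≤ (C ^ (2 * k) : ℕ) := by
          exact_mod_cast (Nat.le_of_dvd (Nat.pos_of_ne_zero hne) hdvd).trans
            (hfC.trans (Nat.pow_le_pow_right hC0 hn2k))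
      _ ≤ x := by push_cast; exact hx
  · exact_mod_cast (ZMod.intCast_eq_intCast_iff_dvd_sub _ _ p).2
      (dvd_sub_comm.1 (Int.natCast_dvd.2 hdvd))

lemma exists_le_pow_and_log_log_le {C : ℝ} (hC : 1 < C) {K : ℕ} (hK : 1 ≤ K) {x : ℝ}
    (hx : C ^ (2 * K) ≤ x) :
    ∃ k ≥ K, C ^ (2 * k) ≤ x ∧ Real.log (Real.log x) ≤ Real.log (2 * (k + 1) * Real.log C) := by
  have hx1 : 1 < x := (one_lt_pow₀ hC (by omega)).trans_le hx
  obtain ⟨k, hkx, hxk⟩ := exists_nat_pow_near hx1.le (one_lt_pow₀ hC two_ne_zero)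
  rw [← pow_mul] at hkx hxk
  refine ⟨k, ?_, hkx, Real.log_le_log (Real.log_pos hx1) ?_⟩
  · have := hx.trans_lt hxk
    rw [pow_lt_pow_iff_right₀ hC] at this
    omega
  · have := Real.log_lt_log (by linarith) hxk
    rw [Real.log_pow] at this
    push_cast at this
    linarith

end TwoVariableArtin

/-- **Theorem 1.2** (two-variable Artin conjecture, weak lower bound).
Let `a, b` be nonzero integers with `|a| ≠ 1`. Then there exist `c > 0` and `x₀`
such that for all real `x ≥ x₀`, the number of primes `p ≤ x` with `p ∤ a` such that
`b mod p` lies in the subgroup of `𝔽_p^×` generated by `a mod p` (equivalently,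
`a ^ n ≡ b (mod p)` for some positive integer `n`) is at least `c · log log x`. -/
theorem two_variable_artin_weak_lower_bound (a b : ℤ) (ha : a ≠ 0) (hb : b ≠ 0)
    (ha1 : |a| ≠ 1) :
    ∃ c : ℝ, 0 < c ∧ ∃ x₀ : ℝ, ∀ x : ℝ, x₀ ≤ x →
      c * Real.log (Real.log x) ≤
        ({p : ℕ | p.Prime ∧ (p : ℝ) ≤ x ∧ ¬ (p : ℤ) ∣ a ∧
            ∃ n : ℕ, 0 < n ∧ (a : ZMod p) ^ n = (b : ZMod p)}.ncard : ℝ) := by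
  have hA : 2 ≤ a.natAbs := by
    have := Int.natAbs_ne_zero.2 ha
    have : a.natAbs ≠ 1 := fun h => ha1 (by rw [Int.abs_eq_natAbs, h, Nat.cast_one])
    omega
  set C := a.natAbs + b.natAbs
  have hC : (1 : ℝ) < C := by exact_mod_cast (show 1 < C by omega)
  obtain ⟨K, hK⟩ := eventually_atTop.1 <|
    (TwoVariableArtin.eventually_log_le_card_powSubPrimeFactors hA hb le_rfl).and
      (eventually_ge_atTop 1)
  refine ⟨1, one_pos, (C : ℝ) ^ (2 * K), fun x hx => ?_⟩
  obtain ⟨k, hKk, hkx, hlog⟩ := TwoVariableArtin.exists_le_pow_and_log_log_le hC (hK K le_rfl).2 hx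
  have hfin : {p : ℕ | p.Prime ∧ (p : ℝ) ≤ x ∧ ¬ (p : ℤ) ∣ a ∧
      ∃ n : ℕ, 0 < n ∧ (a : ZMod p) ^ n = (b : ZMod p)}.Finite :=
    (Set.finite_Iic ⌊x⌋₊).subset fun p hp => Nat.le_floor hp.2.1
  calc 1 * Real.log (Real.log x) ≤ #(TwoVariableArtin.powSubPrimeFactors a b k) := by
        rw [one_mul]; exact hlog.trans (hK k hKk).1
    _ ≤ _ := by
        rw [← Set.ncard_coe_finset]
        exact_mod_cast Set.ncard_le_ncard
          (TwoVariableArtin.coe_powSubPrimeFactors_subset le_rfl hkx) hfin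
end

section
/- Let r, s be integers with r² + 4s ≠ 0 and let α, β be the two distinct complex roots of x² − rx − s. Suppose α·β ≠ 0, α/β is not a root of unity, and |α| ≥ |β|. Then |α| ≥ √2. -/
/-!
If `‖α‖ < √2`, then `|s| = ‖α‖ ‖β‖ ≤ ‖α‖² < 2` forces `|s| = 1`, so `‖β‖ = 1 / ‖α‖` and
`|r² + 4s| = ‖α - β‖² ≤ (‖α‖ + 1 / ‖α‖)² < 9 / 2`. The four pairs `(r, s)` that survive give
quadratics dividing `x¹² - 1`, so `(α / β)¹² = 1`.
-/

theorem sq_add_lt_of_mul_eq_one {a b : ℝ} (hb : 0 ≤ b) (hba : b ≤ a) (hab : a * b = 1)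
    (ha : a ^ 2 < 2) : (a + b) ^ 2 < 9 / 2 := by
  have ha1 : 1 ≤ a ^ 2 := by nlinarith
  -- multiplied by `2a²`, the bound `a² + b² < 5 / 2` reads `(a² - 2)(2a² - 1) < 0`
  nlinarith [mul_neg_of_neg_of_pos (sub_neg.2 ha) (by linarith : (0 : ℝ) < 2 * a ^ 2 - 1)]

theorem norm_sub_sq_eq_abs_discrim {α β : ℂ} {r s : ℤ} (hsum : α + β = r)
    (hprod : α * β = -s) : ‖α - β‖ ^ 2 = ((|r ^ 2 + 4 * s| : ℤ) : ℝ) := by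
  have hdisc : (α - β) ^ 2 = ((r ^ 2 + 4 * s : ℤ) : ℂ) := by
    push_cast
    linear_combination (α + β + r) * hsum - 4 * hprod
  rw [← norm_pow, hdisc, Complex.norm_intCast, Int.cast_abs]

theorem pow_twelve_eq_one_of_sq_eq {R : Type*} [CommRing R] {x : R} {r s : ℤ} (hs : |s| = 1)
    (hd : |r ^ 2 + 4 * s| ≤ 4) (hd0 : r ^ 2 + 4 * s ≠ 0) (hx : x ^ 2 = r * x + s) :
    x ^ 12 = 1 := by
  rw [abs_le] at hd
  obtain ⟨hr1, hr2⟩ : -2 ≤ r ∧ r ≤ 2 := by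
    constructor <;> nlinarith [abs_le.1 hs.le]
  rcases abs_eq zero_le_one |>.1 hs with rfl | rfl <;> interval_cases r <;> try omega
  all_goals push_cast at hx
  -- each coefficient is the quotient of `x¹² - 1` by `x² - r x - s`
  · linear_combination (x ^ 10 + x ^ 8 + x ^ 6 + x ^ 4 + x ^ 2 + 1) * hx
  · linear_combination (x - 1) * (x ^ 9 + x ^ 6 + x ^ 3 + 1) * hx
  · linear_combination (x ^ 2 - 1) * (x ^ 8 + x ^ 4 + 1) * hx
  · linear_combination (x ^ 3 - 1) * (x + 1) * (x ^ 6 + 1) * hx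

theorem dominant_root_ge_sqrt_two_general
    (r s : ℤ) (hrs : r ^ 2 + 4 * s ≠ 0)
    (α β : ℂ) (hsum : α + β = (r : ℂ)) (hprod : α * β = -(s : ℂ))
    (hnd : α * β ≠ 0)
    (hnru : ∀ n : ℕ, 0 < n → (α / β) ^ n ≠ 1)
    (habs : ‖β‖ ≤ ‖α‖) :
    Real.sqrt 2 ≤ ‖α‖ := by
  by_contra! hlt
  have ha2 : ‖α‖ ^ 2 < 2 := (Real.lt_sqrt (norm_nonneg _)).1 hlt
  have hnorm_s : ‖α‖ * ‖β‖ = |(s : ℝ)| := by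
    rw [← norm_mul, hprod, norm_neg, Complex.norm_intCast]
  have hs : |s| = 1 := by
    have hs0 : s ≠ 0 := by
      rintro rfl
      exact hnd (by simpa using hprod)
    have : |(s : ℝ)| < 2 := by nlinarith [mul_le_mul_of_nonneg_left habs (norm_nonneg α)]
    have : |s| < 2 := by exact_mod_cast this
    have := abs_pos.2 hs0
    omega
  have hdisc : |r ^ 2 + 4 * s| ≤ 4 := by
    have hab : ‖α‖ * ‖β‖ = 1 := by rw [hnorm_s, ← Int.cast_abs, hs, Int.cast_one]
    have : ((|r ^ 2 + 4 * s| : ℤ) : ℝ) < 9 / 2 := calc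
      ((|r ^ 2 + 4 * s| : ℤ) : ℝ) = ‖α - β‖ ^ 2 := (norm_sub_sq_eq_abs_discrim hsum hprod).symm
      _ ≤ (‖α‖ + ‖β‖) ^ 2 := by gcongr; exact norm_sub_le α β
      _ < 9 / 2 := sq_add_lt_of_mul_eq_one (norm_nonneg β) habs hab ha2
    have : ((|r ^ 2 + 4 * s| : ℤ) : ℝ) < 5 := by linarith
    have : |r ^ 2 + 4 * s| < 5 := by exact_mod_cast this
    omega
  have hα : α ^ 12 = 1 :=
    pow_twelve_eq_one_of_sq_eq hs hdisc hrs (by linear_combination α * hsum - hprod)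
  have hβ : β ^ 12 = 1 :=
    pow_twelve_eq_one_of_sq_eq hs hdisc hrs (by linear_combination β * hsum - hprod)
  exact hnru 12 (by norm_num) (by rw [div_pow, hα, hβ, div_one])

/-- **Inequality (2.2).** Let `r, s` be integers with `r² + 4s ≠ 0` and let `α, β` be
the two distinct complex roots of `x² - r x - s` (so `α + β = r` and `αβ = -s`).
If `αβ ≠ 0`, `α/β` is not a root of unity and `|α| ≥ |β|`, then `|α| ≥ √2`. -/
theorem dominant_root_ge_sqrt_two
    (r s : ℤ) (hrs : r ^ 2 + 4 * s ≠ 0)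
    (α β : ℂ) (hαβ : α ≠ β) (hsum : α + β = (r : ℂ)) (hprod : α * β = -(s : ℂ))
    (hnd : α * β ≠ 0)
    (hnru : ∀ n : ℕ, 0 < n → (α / β) ^ n ≠ 1)
    (habs : ‖β‖ ≤ ‖α‖) :
    Real.sqrt 2 ≤ ‖α‖ :=
  dominant_root_ge_sqrt_two_general r s hrs α β hsum hprod hnd hnru habs
end

section
/- Let {t_n} be a non-degenerate Lucas sequence with r = α + β and s = −αβ coprime. Let p be a prime not dividing s, let ℓ be the smallest positive integer such that p divides t_ℓ, and let n be a positive integer. If ℓ does not divide n, then p does not divide t_n. If n = ℓk for a positive integer k, then: for p > 2, v_p(t_n) = v_p(t_ℓ) + v_p(k); for p = 2 and k odd, v_2(t_n) = v_2(t_ℓ); and for p = 2 and k even, v_2(t_n) = v_2(t_{2ℓ}) + v_2(k) − 1. Here v_p denotes the p-adic valuation. -/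
namespace LucasAux

def U (R S : ℤ) : ℕ → ℤ
  | 0 => 0
  | 1 => 1
  | (n+2) => R * U R S (n+1) + S * U R S n

def V (R S : ℤ) : ℕ → ℤ
  | 0 => 2
  | 1 => R
  | (n+2) => R * V R S (n+1) + S * V R S n

lemma U_cast (R S : ℤ) (A B : ℂ) (hs : A + B = (R : ℂ)) (hp : A * B = -(S : ℂ)) :
    ∀ n, (U R S n : ℂ) * (A - B) = A ^ n - B ^ n := by
  intro n
  induction n using Nat.twoStepInduction with
  | zero => simp [U]
  | one => simp [U]
  | more n ih0 ih1 =>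
    simp only [U]
    push_cast
    linear_combination (A + B) * ih1 - A * B * ih0 -
      ((U R S (n+1) : ℂ)) * (A - B) * hs + ((U R S n : ℂ)) * (A - B) * hp

lemma V_cast (R S : ℤ) (A B : ℂ) (hs : A + B = (R : ℂ)) (hp : A * B = -(S : ℂ)) :
    ∀ n, (V R S n : ℂ) = A ^ n + B ^ n := by
  intro n
  induction n using Nat.twoStepInduction with
  | zero => norm_num [V]
  | one => simp [V, hs]
  | more n ih0 ih1 =>
    simp only [V]
    push_cast
    linear_combination (A + B) * ih1 - A * B * ih0 -
      ((V R S (n+1) : ℂ)) * hs + ((V R S n : ℂ)) * hp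

lemma U_ne_zero (R S : ℤ) (A B : ℂ) (hs : A + B = (R : ℂ)) (hp : A * B = -(S : ℂ))
    (j : ℕ) (hj : A ^ j ≠ B ^ j) : U R S j ≠ 0 := by
  intro h
  have := U_cast R S A B hs hp j
  rw [h] at this
  simp at this
  exact hj (sub_eq_zero.mp this.symm) |>.elim

lemma V_sq (R S : ℤ) (A B : ℂ) (hs : A + B = (R : ℂ)) (hp : A * B = -(S : ℂ)) (m : ℕ) :
    (V R S m) ^ 2 = (R ^ 2 + 4 * S) * (U R S m) ^ 2 + 4 * (-S) ^ m := by
  have hU := U_cast R S A B hs hp m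
  have hV := V_cast R S A B hs hp m
  have hR : (R : ℂ) = A + B := hs.symm
  have hS : (S : ℂ) = -(A * B) := by linear_combination hp
  have key : ((V R S m : ℤ) ^ 2 : ℂ) =
      (((R : ℤ)^2 + 4*S : ℤ) : ℂ) * ((U R S m : ℤ))^2 + 4 * (((-S)^m : ℤ) : ℂ) := by
    push_cast
    rw [hR, hS]
    linear_combination ((V R S m : ℂ) + A^m + B^m) * hV -
      ((U R S m : ℂ) * (A - B) + A^m - B^m) * hU
  exact_mod_cast key

lemma U_mul (R S : ℤ) (A B : ℂ) (hs : A + B = (R : ℂ)) (hp : A * B = -(S : ℂ))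
    (hAB : A ≠ B) (m k : ℕ) :
    U R S (m * k) = U R S m * U (V R S m) (-(-S) ^ m) k := by
  have hs' : A ^ m + B ^ m = ((V R S m : ℤ) : ℂ) := (V_cast R S A B hs hp m).symm
  have hp' : A ^ m * B ^ m = -(((-(-S) ^ m : ℤ)) : ℂ) := by
    push_cast
    rw [← mul_pow, hp]
    push_cast; ring
  have h1 := U_cast R S A B hs hp (m * k)
  have h2 := U_cast (V R S m) (-(-S) ^ m) (A ^ m) (B ^ m) hs' hp' k
  have h3 := U_cast R S A B hs hp m
  have key : ((U R S (m*k) : ℤ) : ℂ) * (A - B) =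
      ((U R S m * U (V R S m) (-(-S) ^ m) k : ℤ) : ℂ) * (A - B) := by
    push_cast
    rw [h1, pow_mul, pow_mul]
    push_cast at h2 h3
    linear_combination -h2 - (U (V R S m) (-(-S) ^ m) k : ℂ) * h3
  have := mul_right_cancel₀ (sub_ne_zero.mpr hAB) key
  exact_mod_cast this

lemma U_double (R S : ℤ) (A B : ℂ) (hs : A + B = (R : ℂ)) (hp : A * B = -(S : ℂ))
    (hAB : A ≠ B) (m : ℕ) :
    U R S (2 * m) = U R S m * V R S m := by
  have h1 := U_cast R S A B hs hp (2 * m)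
  have h3 := U_cast R S A B hs hp m
  have hV := V_cast R S A B hs hp m
  have key : ((U R S (2*m) : ℤ) : ℂ) * (A - B) =
      ((U R S m * V R S m : ℤ) : ℂ) * (A - B) := by
    push_cast
    rw [h1, two_mul, pow_add, pow_add, hV]
    linear_combination -(A^m + B^m) * h3
  have := mul_right_cancel₀ (sub_ne_zero.mpr hAB) key
  exact_mod_cast this

lemma U_add (R S : ℤ) (A B : ℂ) (hs : A + B = (R : ℂ)) (hp : A * B = -(S : ℂ))
    (hAB : A ≠ B) (m j : ℕ) :
    U R S (m + j + 1) = U R S (m+1) * U R S (j+1) + S * U R S m * U R S j := by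
  have h1 := U_cast R S A B hs hp (m + j + 1)
  have h2 := U_cast R S A B hs hp (m + 1)
  have h3 := U_cast R S A B hs hp (j + 1)
  have h4 := U_cast R S A B hs hp m
  have h5 := U_cast R S A B hs hp j
  have hne : (A - B) ^ 2 ≠ 0 := pow_ne_zero _ (sub_ne_zero.mpr hAB)
  have hS : (S : ℂ) = -(A*B) := by linear_combination hp
  have key : ((U R S (m+j+1) : ℤ) : ℂ) * (A-B)^2 =
      ((U R S (m+1) * U R S (j+1) + S * U R S m * U R S j : ℤ) : ℂ) * (A-B)^2 := by
    push_cast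
    have e1 : ((U R S (m+j+1) : ℤ) : ℂ) * (A-B)^2 = (A^(m+j+1) - B^(m+j+1)) * (A - B) := by
      rw [sq, ← mul_assoc, h1]
    rw [e1, hS]
    linear_combination (-((U R S (j+1) : ℂ) * (A-B))) * h2 +
      (-(A^(m+1) - B^(m+1))) * h3 + (A*B*(U R S j : ℂ)*(A-B)) * h4 +
      (A*B*(A^m - B^m)) * h5
  have := mul_right_cancel₀ hne key
  exact_mod_cast this

lemma U_coprime (R S : ℤ) (h : IsCoprime R S) :
    ∀ n, IsCoprime (U R S n) (U R S (n+1)) ∧ IsCoprime S (U R S (n+1)) := by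
  intro n
  induction n with
  | zero =>
    constructor
    · show IsCoprime (0 : ℤ) 1
      exact (isCoprime_zero_left).mpr isUnit_one
    · show IsCoprime S 1
      exact isCoprime_one_right
  | succ n ih =>
    have hrec : U R S (n+2) = S * U R S n + U R S (n+1) * R := by
      show R * U R S (n+1) + S * U R S n = _
      ring
    constructor
    · rw [hrec]
      exact (ih.2.symm.mul_right ih.1.symm).add_mul_left_right R
    · have h1 : IsCoprime S (R * U R S (n+1)) := (h.symm).mul_right ih.2
      have : IsCoprime S (R * U R S (n+1) + S * U R S n) :=
        h1.add_mul_left_right (U R S n)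
      exact this

lemma U_cong (p : ℕ) (R S : ℤ) (hΔ : (p:ℤ)^2 ∣ R^2 + 4*S) :
    ∀ k : ℕ, (p:ℤ)^2 ∣ 2^k * U R S (k+1) - (k+1) * R^k := by
  intro k
  induction k using Nat.twoStepInduction with
  | zero => simp [U]
  | one =>
    have : U R S 2 = R := by simp [U]
    rw [this]; push_cast; ring_nf; simp
  | more k ih0 ih1 =>
    have h := dvd_add (dvd_add (ih1.mul_left (2*R)) (ih0.mul_left (4*S)))
      (hΔ.mul_left (((k:ℤ)+1) * R^k))
    have e : 2*R*(2^(k+1) * U R S (k+1+1) - (((k+1:ℕ):ℤ)+1) * R^(k+1)) +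
        4*S*(2^k * U R S (k+1) - (((k:ℕ):ℤ)+1) * R^k) +
        ((k:ℤ)+1) * R^k * (R^2 + 4*S) =
        2^(k+2) * U R S (k+2+1) - (((k+2:ℕ):ℤ)+1) * R^(k+2) := by
      show _ = 2^(k+2) * (R * U R S (k+2) + S * U R S (k+1)) - _
      push_cast
      ring
    rw [e] at h
    exact h

lemma val_one_of (p : ℕ) [hf : Fact p.Prime] (x : ℤ) (h1 : (p:ℤ) ∣ x)
    (h2 : ¬ (p:ℤ)^2 ∣ x) : padicValInt p x = 1 := by
  have hx : x ≠ 0 := by rintro rfl; exact h2 (dvd_zero _)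
  have l1 : 1 ≤ padicValInt p x := by
    have := (padicValInt_dvd_iff 1 x).mp (by simpa using h1)
    rcases this with h | h
    · exact absurd h hx
    · exact h
  have l2 : ¬ 2 ≤ padicValInt p x := by
    intro h
    exact h2 ((padicValInt_dvd_iff 2 x).mpr (Or.inr h))
  omega

section OddP
variable (p : ℕ) [hf : Fact p.Prime]

/-- For odd `p` with `p ∤ R` and `p² ∣ Δ`: `p ∤ U k` when `p ∤ k`. -/
lemma odd_not_dvd (hodd : p ≠ 2) (R S : ℤ) (hR : ¬ (p:ℤ) ∣ R) (hΔ : (p:ℤ)^2 ∣ R^2 + 4*S)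
    (k : ℕ) (hk : ¬ p ∣ k) : ¬ (p:ℤ) ∣ U R S k := by
  intro hdvd
  have hk1 : 1 ≤ k := by
    rcases Nat.eq_zero_or_pos k with rfl | h
    · exact absurd (dvd_zero p) hk
    · exact h
  obtain ⟨j, rfl⟩ : ∃ j, k = j + 1 := ⟨k - 1, by omega⟩
  have hc := U_cong p R S hΔ j
  have hp2 : (p:ℤ) ∣ 2^j * U R S (j+1) - ((j:ℤ)+1) * R^j :=
    dvd_trans (dvd_pow_self _ two_ne_zero) hc
  have : (p:ℤ) ∣ ((j:ℤ)+1) * R^j := by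
    have := dvd_sub (hdvd.mul_left (2^j)) hp2
    simpa using this
  have hp' : Prime (p:ℤ) := Nat.prime_iff_prime_int.mp hf.out
  rcases hp'.dvd_mul.mp this with h | h
  · have h2 : (p:ℤ) ∣ ((j+1 : ℕ) : ℤ) := by push_cast; exact h
    exact hk (by exact_mod_cast h2)
  · exact hR (hp'.dvd_of_dvd_pow h)

/-- For odd `p` with `p ∤ R` and `p² ∣ Δ`: `v_p(U p) = 1`. -/
lemma odd_val_p (hodd : p ≠ 2) (R S : ℤ) (hR : ¬ (p:ℤ) ∣ R) (hΔ : (p:ℤ)^2 ∣ R^2 + 4*S) :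
    U R S p ≠ 0 ∧ padicValInt p (U R S p) = 1 := by
  have hp' : Prime (p:ℤ) := Nat.prime_iff_prime_int.mp hf.out
  have hpos : 1 ≤ p := hf.out.one_lt.le
  obtain ⟨j, hj⟩ : ∃ j, p = j + 1 := ⟨p - 1, by omega⟩
  have hc0 := U_cong p R S hΔ j
  have hc : (p:ℤ)^2 ∣ 2^j * U R S p - (p:ℤ) * R^j := by
    rw [← hj] at hc0
    convert hc0 using 3
    rw [hj]
    push_cast
    ring
  have hnd2 : ¬ (p:ℤ) ∣ 2 := by
    intro h
    have h2 : p ∣ 2 := by exact_mod_cast h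
    exact hodd ((Nat.prime_dvd_prime_iff_eq hf.out Nat.prime_two).mp h2)
  have hnd2j : ¬ (p:ℤ) ∣ 2^j := fun h => hnd2 (hp'.dvd_of_dvd_pow h)
  have hdvd1 : (p:ℤ) ∣ U R S p := by
    have hpc : (p:ℤ) ∣ 2^j * U R S p - (p:ℤ) * R^j :=
      dvd_trans (dvd_pow_self _ two_ne_zero) hc
    have : (p:ℤ) ∣ 2^j * U R S p := by
      have h2 : (p:ℤ) ∣ (p:ℤ) * R^j := Dvd.intro _ rfl
      have := dvd_add hpc h2
      simpa using this
    rcases hp'.dvd_mul.mp this with h | h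
    · exact absurd h hnd2j
    · exact h
  have hndvd2 : ¬ (p:ℤ)^2 ∣ U R S p := by
    intro h
    have h1 : (p:ℤ)^2 ∣ 2^j * U R S p := h.mul_left _
    have h2 : (p:ℤ)^2 ∣ (p:ℤ) * R^j := by
      have := dvd_sub h1 hc
      simpa using this
    have : (p:ℤ) ∣ R^j := by
      have hpne : (p:ℤ) ≠ 0 := by exact_mod_cast hf.out.ne_zero
      rw [sq] at h2
      exact (mul_dvd_mul_iff_left hpne).mp h2
    exact hR (hp'.dvd_of_dvd_pow this)
  refine ⟨fun h => hndvd2 (h ▸ dvd_zero _), val_one_of p _ hdvd1 hndvd2⟩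
end OddP


lemma odd_main (p : ℕ) [hf : Fact p.Prime] (hodd : p ≠ 2) :
    ∀ k : ℕ, 0 < k → ∀ (R S : ℤ) (A B : ℂ), A + B = (R:ℂ) → A * B = -(S:ℂ) → A ≠ B →
    ¬ (p:ℤ) ∣ R → ¬ (p:ℤ) ∣ S → (p:ℤ)^2 ∣ R^2 + 4*S →
    U R S k ≠ 0 ∧ padicValInt p (U R S k) = padicValNat p k := by
  intro k
  induction k using Nat.strong_induction_on with
  | _ k ih =>
    intro hk R S A B hs hp hAB hR hS hΔ
    have hp' : Prime (p:ℤ) := Nat.prime_iff_prime_int.mp hf.out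
    by_cases hpk : p ∣ k
    · obtain ⟨m, rfl⟩ := hpk
      have hm : 0 < m := by
        rcases Nat.eq_zero_or_pos m with rfl | h
        · simp at hk
        · exact h
      have hmlt : m < p * m := by
        have h1 : 1 * m < p * m := (Nat.mul_lt_mul_right hm).mpr hf.out.one_lt
        omega
      have hVsq := V_sq R S A B hs hp m
      have hpS' : ¬ (p:ℤ) ∣ (-(-S)^m) := by
        intro h
        have : (p:ℤ) ∣ (-S)^m := (dvd_neg.mp h)
        exact hS (dvd_neg.mp (hp'.dvd_of_dvd_pow this))
      have hp4 : ¬ (p:ℤ) ∣ 4 := by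
        intro h
        have h4 : (4 : ℤ) = 2^2 := by norm_num
        rw [h4] at h
        have : (p:ℤ) ∣ 2 := hp'.dvd_of_dvd_pow h
        have h2 : p ∣ 2 := by exact_mod_cast this
        exact hodd ((Nat.prime_dvd_prime_iff_eq hf.out Nat.prime_two).mp h2)
      have hpV : ¬ (p:ℤ) ∣ V R S m := by
        intro h
        have hpΔ : (p:ℤ) ∣ R^2 + 4*S := dvd_trans (dvd_pow_self _ two_ne_zero) hΔ
        have : (p:ℤ) ∣ 4 * (-S)^m := by
          have := dvd_sub ((h.mul_left (V R S m)).trans (by rw [← sq]))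
            (hpΔ.mul_right ((U R S m)^2))
          rw [hVsq] at this
          simpa using this
        rcases hp'.dvd_mul.mp this with h' | h'
        · exact hp4 h'
        · exact hpS' (by simpa using (h' : (p:ℤ) ∣ (-S)^m).neg_right)
      have hΔ' : (p:ℤ)^2 ∣ (V R S m)^2 + 4*(-(-S)^m) := by
        have e : (V R S m)^2 + 4*(-(-S)^m) = (R^2 + 4*S) * (U R S m)^2 := by
          linear_combination hVsq
        rw [e]
        exact hΔ.mul_right _
      have hIH := ih m hmlt hm R S A B hs hp hAB hR hS hΔ
      have hvp := odd_val_p p hodd (V R S m) (-(-S)^m) hpV hΔ'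
      have hmul : U R S (p * m) = U R S m * U (V R S m) (-(-S)^m) p := by
        rw [mul_comm p m]
        exact U_mul R S A B hs hp hAB m p
      constructor
      · rw [hmul]
        exact mul_ne_zero hIH.1 hvp.1
      · rw [hmul, padicValInt.mul hIH.1 hvp.1, hIH.2, hvp.2,
          padicValNat.mul hf.out.ne_zero hm.ne',
          padicValNat.self hf.out.one_lt]
        omega
    · have hnd := odd_not_dvd p hodd R S hR hΔ k hpk
      refine ⟨fun h => hnd (h ▸ dvd_zero _), ?_⟩
      rw [padicValInt.eq_zero_of_not_dvd hnd, padicValNat.eq_zero_of_not_dvd hpk]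

lemma odd_index_odd (R S : ℤ) (hR : (2:ℤ) ∣ R) (hS : Odd S) :
    ∀ m, Odd (U R S (2*m+1)) := by
  intro m
  induction m with
  | zero => simp [U]
  | succ m ih =>
    have e : 2*(m+1)+1 = (2*m+1)+2 := by ring
    rw [e]
    show Odd (R * U R S (2*m+1+1) + S * U R S (2*m+1))
    obtain ⟨u, hu⟩ := hR
    have hEv : Even (R * U R S (2*m+1+1)) := ⟨u * U R S (2*m+1+1), by rw [hu]; ring⟩
    exact hEv.add_odd (hS.mul ih)

lemma even_V (R S : ℤ) (A B : ℂ) (hs : A + B = (R:ℂ)) (hp : A * B = -(S:ℂ))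
    (hS : Odd S) (hΔ : (8:ℤ) ∣ R^2 + 4*S) (m : ℕ) :
    V R S m ≠ 0 ∧ padicValInt 2 (V R S m) = 1 := by
  obtain ⟨d, hd⟩ := hΔ
  have hVsq := V_sq R S A B hs hp m
  rw [hd] at hVsq
  have hev : Even (V R S m) := by
    have : Even ((V R S m)^2) := by
      rw [hVsq]
      refine ⟨4*d*(U R S m)^2 + 2*(-S)^m, by ring⟩
    simpa [Int.even_pow] using this
  obtain ⟨c, hc⟩ := hev
  have hc2 : V R S m = 2 * c := by omega
  have hcsq : c^2 = 2*d*(U R S m)^2 + (-S)^m := by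
    have : (2*c)^2 = 8*d*(U R S m)^2 + 4*(-S)^m := by rw [← hc2, hVsq]
    nlinarith [this]
  have hcodd : Odd c := by
    have h1 : Odd ((-S)^m) := (hS.neg).pow
    have h2 : Odd (c^2) := by
      rw [hcsq]
      exact (Even.add_odd ⟨d*(U R S m)^2, by ring⟩ h1)
    simpa [Int.odd_pow] using h2
  have hne : c ≠ 0 := by rintro rfl; simp at hcodd
  refine ⟨by rw [hc2]; exact mul_ne_zero two_ne_zero hne, ?_⟩
  refine val_one_of 2 _ ⟨c, hc2⟩ ?_
  intro h
  rw [hc2] at h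
  have h' : (4:ℤ) ∣ 2*c := by exact_mod_cast h
  have hc1 := Int.odd_iff.mp hcodd
  omega

lemma even_main (R S : ℤ) (A B : ℂ) (hs : A + B = (R:ℂ)) (hp : A * B = -(S:ℂ))
    (hAB : A ≠ B) (hR : (2:ℤ) ∣ R) (hS : Odd S) (hΔ : (8:ℤ) ∣ R^2 + 4*S) :
    ∀ k : ℕ, 0 < k → U R S k ≠ 0 ∧ padicValInt 2 (U R S k) = padicValNat 2 k := by
  intro k
  induction k using Nat.strong_induction_on with
  | _ k ih =>
    intro hk
    rcases Nat.even_or_odd k with he | ho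
    · obtain ⟨m, hm⟩ := he
      have hm2 : k = 2 * m := by omega
      subst hm2
      have hmpos : 0 < m := by omega
      have hmlt : m < 2 * m := by omega
      have hIH := ih m hmlt hmpos
      have hV := even_V R S A B hs hp hS hΔ m
      have hdbl := U_double R S A B hs hp hAB m
      constructor
      · rw [hdbl]; exact mul_ne_zero hIH.1 hV.1
      · rw [hdbl, padicValInt.mul hIH.1 hV.1, hIH.2, hV.2,
          padicValNat.mul two_ne_zero hmpos.ne',
          padicValNat.self (by norm_num)]
        omega
    · obtain ⟨m, hm⟩ := ho
      subst hm
      have hodd := odd_index_odd R S hR hS m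
      have hnd : ¬ (2:ℤ) ∣ U R S (2*m+1) := by
        intro hdvd
        have := Int.odd_iff.mp hodd
        omega
      refine ⟨fun h => hnd (h ▸ dvd_zero _), ?_⟩
      have : ¬ 2 ∣ (2*m+1) := by omega
      rw [padicValInt.eq_zero_of_not_dvd hnd, padicValNat.eq_zero_of_not_dvd this]

end LucasAux

open LucasAux

/-- **Proposition 3.2.** Let `{t_n}` be a non-degenerate Lucas sequence with
`r = α + β` and `s = -αβ` coprime. Let `p` be a prime not dividing `s`, let `ℓ` be the
smallest positive integer with `p ∣ t_ℓ`, and let `n` be a positive integer. If `ℓ ∤ n`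
then `p ∤ t_n`. If `n = ℓ k` then: for `p > 2`, `v_p(t_n) = v_p(t_ℓ) + v_p(k)`; for
`p = 2` and `k` odd, `v_2(t_n) = v_2(t_ℓ)`; for `p = 2` and `k` even,
`v_2(t_n) = v_2(t_{2ℓ}) + v_2(k) - 1`. -/
theorem lucas_p_adic_valuation
    (t : ℕ → ℤ) (r s : ℤ) (hrs : r ^ 2 + 4 * s ≠ 0) (hcop : IsCoprime r s)
    (h0 : t 0 = 0) (h1 : t 1 = 1)
    (hrec : ∀ n : ℕ, t (n + 2) = r * t (n + 1) + s * t n)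
    (α β : ℂ) (hαβ : α ≠ β) (hsum : α + β = (r : ℂ)) (hprod : α * β = -(s : ℂ))
    (hnd : α * β ≠ 0)
    (hnru : ∀ n : ℕ, 0 < n → (α / β) ^ n ≠ 1)
    (p : ℕ) (hp : p.Prime) (hps : ¬ (p : ℤ) ∣ s)
    (ℓ : ℕ) (hℓ : IsLeast {n : ℕ | 0 < n ∧ (p : ℤ) ∣ t n} ℓ)
    (n : ℕ) (hn : 0 < n) :
    (¬ ℓ ∣ n → ¬ (p : ℤ) ∣ t n) ∧
    (∀ k : ℕ, 0 < k → n = ℓ * k →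
      (2 < p → padicValInt p (t n) = padicValInt p (t ℓ) + padicValNat p k) ∧
      (p = 2 →
        (Odd k → padicValInt 2 (t n) = padicValInt 2 (t ℓ)) ∧
        (Even k →
          (padicValInt 2 (t n) : ℤ) =
            (padicValInt 2 (t (2 * ℓ)) : ℤ) + (padicValNat 2 k : ℤ) - 1))) := by
  have hf : Fact p.Prime := ⟨hp⟩
  have hp' : Prime (p:ℤ) := Nat.prime_iff_prime_int.mp hp
  have hβ : β ≠ 0 := fun h => hnd (by simp [h])
  have hpow : ∀ j : ℕ, 0 < j → α ^ j ≠ β ^ j := by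
    intro j hj h
    apply hnru j hj
    rw [div_pow, h, div_self (pow_ne_zero _ hβ)]
  have ht : ∀ m, t m = U r s m := by
    intro m
    induction m using Nat.twoStepInduction with
    | zero => simpa [U] using h0
    | one => simpa [U] using h1
    | more m ih0 ih1 =>
      rw [hrec m, ih0, ih1]
      rfl
  obtain ⟨⟨hℓpos, hℓdvd⟩, hmin⟩ := hℓ
  rw [ht ℓ] at hℓdvd
  constructor
  · -- rank of apparition
    intro hnd' hdvd
    rw [ht n] at hdvd
    have hρpos : 0 < n % ℓ := Nat.pos_of_ne_zero (fun h => hnd' (Nat.dvd_of_mod_eq_zero h))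
    have hρlt : n % ℓ < ℓ := Nat.mod_lt _ hℓpos
    have hnn : ℓ * (n / ℓ) + n % ℓ = n := Nat.div_add_mod n ℓ
    have hdq : (p:ℤ) ∣ U r s (ℓ * (n / ℓ)) := by
      rw [U_mul r s α β hsum hprod hαβ ℓ (n / ℓ)]
      exact hℓdvd.mul_right _
    have hcop' := U_coprime r s hcop (ℓ * (n / ℓ))
    have hnd1 : ¬ (p:ℤ) ∣ U r s (ℓ * (n / ℓ) + 1) := by
      intro h
      exact hp'.not_unit (hcop'.1.isUnit_of_dvd' hdq h)
    obtain ⟨j, hjρ⟩ : ∃ j, n % ℓ = j + 1 := ⟨n % ℓ - 1, by omega⟩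
    have hadd := U_add r s α β hsum hprod hαβ (ℓ * (n / ℓ)) j
    have hidx : ℓ * (n / ℓ) + j + 1 = n := by omega
    rw [hidx] at hadd
    have h2 : (p:ℤ) ∣ U r s (ℓ * (n / ℓ) + 1) * U r s (j+1) := by
      have h3 : (p:ℤ) ∣ s * U r s (ℓ * (n / ℓ)) * U r s j :=
        (hdq.mul_left s).mul_right _
      rw [hadd] at hdvd
      have := dvd_sub hdvd h3
      simpa using this
    rcases hp'.dvd_mul.mp h2 with h | h
    · exact hnd1 h
    · have : ℓ ≤ n % ℓ := hmin ⟨hρpos, by rw [ht (n % ℓ), hjρ]; exact h⟩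
      omega
  · intro k hk hnk
    have hℓ2pos : 0 < 2 * ℓ := by omega
    have hαl : α^ℓ ≠ β^ℓ := hpow ℓ hℓpos
    have hsl : α^ℓ + β^ℓ = ((V r s ℓ : ℤ) : ℂ) := (V_cast r s α β hsum hprod ℓ).symm
    have hpl : α^ℓ * β^ℓ = -(((-(-s)^ℓ : ℤ)) : ℂ) := by
      push_cast
      rw [← mul_pow, hprod]
      ring
    have hVsq := V_sq r s α β hsum hprod ℓ
    have hUlne : U r s ℓ ≠ 0 := U_ne_zero r s α β hsum hprod ℓ hαl
    have hmuln : U r s n = U r s ℓ * U (V r s ℓ) (-(-s)^ℓ) k := by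
      rw [hnk]
      exact U_mul r s α β hsum hprod hαβ ℓ k
    constructor
    · -- odd p
      intro hp2
      have hoddp : p ≠ 2 := by omega
      have hp4 : ¬ (p:ℤ) ∣ 4 := by
        intro h
        have h4 : (4 : ℤ) = 2^2 := by norm_num
        rw [h4] at h
        have h2 : p ∣ 2 := by exact_mod_cast hp'.dvd_of_dvd_pow h
        have := Nat.le_of_dvd (by norm_num) h2
        omega
      have hpS' : ¬ (p:ℤ) ∣ (-(-s)^ℓ) := by
        intro h
        exact hps (dvd_neg.mp (hp'.dvd_of_dvd_pow (dvd_neg.mp h)))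
      have hpV : ¬ (p:ℤ) ∣ V r s ℓ := by
        intro h
        have hDU : (p:ℤ) ∣ (r^2+4*s) * (U r s ℓ)^2 :=
          (dvd_pow hℓdvd two_ne_zero).mul_left _
        have h4S : (p:ℤ) ∣ 4 * (-s)^ℓ := by
          have hVV : (p:ℤ) ∣ (V r s ℓ)^2 := (dvd_pow h two_ne_zero)
          have := dvd_sub hVV hDU
          rw [hVsq] at this
          simpa using this
        rcases hp'.dvd_mul.mp h4S with h' | h'
        · exact hp4 h'
        · exact hps (dvd_neg.mp (hp'.dvd_of_dvd_pow h'))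
      have hΔ' : (p:ℤ)^2 ∣ (V r s ℓ)^2 + 4*(-(-s)^ℓ) := by
        have e : (V r s ℓ)^2 + 4*(-(-s)^ℓ) = (r^2 + 4*s) * (U r s ℓ)^2 := by
          linear_combination hVsq
        rw [e]
        exact (pow_dvd_pow_of_dvd hℓdvd 2).mul_left _
      have hmain := odd_main p hoddp k hk (V r s ℓ) (-(-s)^ℓ) (α^ℓ) (β^ℓ)
        hsl hpl hαl hpV hpS' hΔ'
      rw [ht n, ht ℓ, hmuln, padicValInt.mul hUlne hmain.1, hmain.2]
    · -- p = 2
      intro hp2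
      subst hp2
      have hsodd : Odd s := by
        rw [Int.odd_iff]
        omega
      have hS'odd : Odd (-(-s)^ℓ) := (hsodd.neg.pow).neg
      have hℓ2 : (2:ℤ) ∣ U r s ℓ := by exact_mod_cast hℓdvd
      have hV2 : (2:ℤ) ∣ V r s ℓ := by
        obtain ⟨x, hx⟩ := hℓ2
        have hev : Even ((V r s ℓ)^2) := by
          rw [hVsq, hx]
          exact ⟨(r^2+4*s)*2*x^2 + 2*(-s)^ℓ, by ring⟩
        have := Int.even_pow.mp hev
        obtain ⟨c, hc⟩ := this.1
        exact ⟨c, by omega⟩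
      constructor
      · -- k odd
        intro hkodd
        obtain ⟨m, rfl⟩ := hkodd
        have hodd' := odd_index_odd (V r s ℓ) (-(-s)^ℓ) hV2 hS'odd m
        have hne : U (V r s ℓ) (-(-s)^ℓ) (2*m+1) ≠ 0 := by
          intro h
          rw [h] at hodd'
          simp at hodd'
        have hval0 : padicValInt 2 (U (V r s ℓ) (-(-s)^ℓ) (2*m+1)) = 0 := by
          apply padicValInt.eq_zero_of_not_dvd
          intro hdvd
          have := Int.odd_iff.mp hodd'
          omega
        rw [ht n, ht ℓ, hmuln, padicValInt.mul hUlne hne, hval0]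
        omega
      · -- k even
        intro hkeven
        obtain ⟨k', hk'⟩ := hkeven
        have hk2 : k = 2 * k' := by omega
        have hk'pos : 0 < k' := by omega
        have hα2 : α^(2*ℓ) ≠ β^(2*ℓ) := hpow (2*ℓ) hℓ2pos
        have hs2 : α^(2*ℓ) + β^(2*ℓ) = ((V r s (2*ℓ) : ℤ) : ℂ) :=
          (V_cast r s α β hsum hprod (2*ℓ)).symm
        have hp2c : α^(2*ℓ) * β^(2*ℓ) = -(((-(-s)^(2*ℓ) : ℤ)) : ℂ) := by
          push_cast
          rw [← mul_pow, hprod]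
          ring
        have hdbl := U_double r s α β hsum hprod hαβ ℓ
        have hU4 : (4:ℤ) ∣ U r s (2*ℓ) := by
          obtain ⟨x, hx⟩ := hℓ2
          obtain ⟨y, hy⟩ := hV2
          rw [hdbl, hx, hy]
          exact ⟨x*y, by ring⟩
        have hVsq2 := V_sq r s α β hsum hprod (2*ℓ)
        have hV22 : (2:ℤ) ∣ V r s (2*ℓ) := by
          obtain ⟨x, hx⟩ := hU4
          have hev : Even ((V r s (2*ℓ))^2) := by
            rw [hVsq2, hx]
            exact ⟨(r^2+4*s)*8*x^2 + 2*(-s)^(2*ℓ), by ring⟩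
          have := Int.even_pow.mp hev
          obtain ⟨c, hc⟩ := this.1
          exact ⟨c, by omega⟩
        have hS2odd : Odd (-(-s)^(2*ℓ)) := (hsodd.neg.pow).neg
        have hΔ2 : (8:ℤ) ∣ (V r s (2*ℓ))^2 + 4*(-(-s)^(2*ℓ)) := by
          have e : (V r s (2*ℓ))^2 + 4*(-(-s)^(2*ℓ)) = (r^2 + 4*s) * (U r s (2*ℓ))^2 := by
            linear_combination hVsq2
          rw [e]
          obtain ⟨x, hx⟩ := hU4
          rw [hx]
          exact ⟨(r^2+4*s)*2*x^2, by ring⟩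
        have hmain := even_main (V r s (2*ℓ)) (-(-s)^(2*ℓ)) (α^(2*ℓ)) (β^(2*ℓ))
          hs2 hp2c hα2 hV22 hS2odd hΔ2 k' hk'pos
        have hU2ne : U r s (2*ℓ) ≠ 0 := U_ne_zero r s α β hsum hprod (2*ℓ) hα2
        have hmuln2 : U r s n = U r s (2*ℓ) * U (V r s (2*ℓ)) (-(-s)^(2*ℓ)) k' := by
          rw [hnk, hk2, show ℓ * (2 * k') = (2*ℓ) * k' by ring]
          exact U_mul r s α β hsum hprod hαβ (2*ℓ) k'
        have hvk : padicValNat 2 k = 1 + padicValNat 2 k' := by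
          rw [hk2, padicValNat.mul two_ne_zero hk'pos.ne', padicValNat.self (by norm_num)]
        rw [ht n, ht (2*ℓ), hmuln2, padicValInt.mul hU2ne hmain.1, hmain.2, hvk]
        push_cast
        ring
end
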